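/- arXiv:2501.09852 — 5 statements merged into one kernel-verified Lean document; each statement's English description precedes it below -/
import Mathlib

section
/- Assume n is even, n ≥ 2, and a = c ≠ 0. Then: (i) f(f(X)) = 0 for every X ∈ F_{q^2}; (ii) {X ∈ F_{q^2} : f(X) = 0} = {X : X^q = X} ∪ {X : X^q = −X}, and this set has exactly 2q − 1 elements; (iii) there are exactly q − 1 nonzero elements α ∈ F_{q^2} with f^{-1}(α) nonempty, and for each such α one has #f^{-1}(α) = q − 1. -/
open Polynomial in
private lemma aux_root_card_le {F : Type*} [Field F] (q : ℕ) (hq : 2 ≤ q) (u : F) :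
    {x : F | x ^ q = u * x}.ncard ≤ q := by
  classical
  set P : F[X] := X ^ q - C u * X with hP
  have h1 : (C u * X : F[X]).natDegree < (X ^ q : F[X]).natDegree := by
    rw [natDegree_X_pow]
    exact lt_of_le_of_lt ((natDegree_C_mul_le u X).trans_eq natDegree_X) hq
  have hdeg : P.natDegree = q := by
    rw [hP, natDegree_sub_eq_left_of_natDegree_lt h1, natDegree_X_pow]
  have hP0 : P ≠ 0 := by
    intro h
    rw [h, natDegree_zero] at hdeg
    omega
  have hset : {x : F | x ^ q = u * x} = ↑P.roots.toFinset := by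
    ext x
    simp only [Set.mem_setOf_eq, Finset.mem_coe, Multiset.mem_toFinset, mem_roots', hP,
      IsRoot, eval_sub, eval_pow, eval_X, eval_mul, eval_C, sub_eq_zero]
    exact ⟨fun h => ⟨hP0, h⟩, fun h => h.2⟩
  rw [hset, Set.ncard_coe_finset]
  calc P.roots.toFinset.card ≤ Multiset.card P.roots := P.roots.toFinset_card_le
    _ ≤ P.natDegree := card_roots' P
    _ = q := hdeg

/-- `n` even, `n ≥ 2`, `a = c ≠ 0`. Then (i) `f ∘ f ≡ 0`;
(ii) the zero set of `f` is `{X : X^q = X} ∪ {X : X^q = -X}` and has `2q - 1` elements;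
(iii) there are exactly `q - 1` nonzero `α` with nonempty preimage, each of size `q - 1`. -/
theorem stmt_0 (p s q : ℕ) (hp : p.Prime) (hpodd : p ≠ 2) (hs : 0 < s) (hq : q = p ^ s)
    (F : Type*) [Field F] [Fintype F] (hF : Fintype.card F = q ^ 2)
    (a c : F) (ha : a ^ q = a) (hc : c ^ q = c)
    (n : ℕ) (hn2 : 2 ≤ n) (hneven : Even n)
    (hac : a = c) (hc0 : c ≠ 0)
    (f : F → F) (hf : ∀ X, f X = (c * X ^ q + a * X) * (X ^ q - X) ^ (n - 1)) :
    (∀ X : F, f (f X) = 0) ∧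
    ({X : F | f X = 0} = {X : F | X ^ q = X} ∪ {X : F | X ^ q = -X} ∧
      {X : F | f X = 0}.ncard = 2 * q - 1) ∧
    ({α : F | α ≠ 0 ∧ (f ⁻¹' {α}).Nonempty}.ncard = q - 1 ∧
      ∀ α : F, α ≠ 0 → (f ⁻¹' {α}).Nonempty → (f ⁻¹' {α}).ncard = q - 1) := by
  classical
  rw [hac] at hf ha
  haveI : Fact p.Prime := ⟨hp⟩
  have hp2 : 2 ≤ p := hp.two_le
  have hq2 : 2 ≤ q := by
    have : p ≤ q := hq ▸ Nat.le_self_pow hs.ne' p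
    omega
  have hq0 : q ≠ 0 := by omega
  -- characteristic
  obtain ⟨r, hr⟩ := CharP.exists F
  haveI := hr
  have hrp : r.Prime := CharP.char_is_prime F r
  obtain ⟨m, -, hcard⟩ := FiniteField.card F r
  have hrdvd : r ∣ p := by
    have hcc : r ^ (m : ℕ) = p ^ (2 * s) := by
      rw [← hcard, hF, hq, ← pow_mul, mul_comm s 2]
    exact hrp.dvd_of_dvd_pow (hcc ▸ dvd_pow_self r m.ne_zero)
  have hpr : p = r := ((Nat.prime_dvd_prime_iff_eq hrp hp).1 hrdvd).symm
  haveI hchar : CharP F p := hpr ▸ hr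
  -- basic facts
  have hqodd : Odd q := hq ▸ (hp.odd_of_ne_two hpodd).pow
  have hn1odd : Odd (n - 1) := Nat.Even.sub_odd (by omega) hneven odd_one
  have hn1pos : n - 1 ≠ 0 := by omega
  have frobadd : ∀ x y : F, (x + y) ^ q = x ^ q + y ^ q := by
    intro x y; rw [hq]; exact add_pow_char_pow ..
  have frobsub : ∀ x y : F, (x - y) ^ q = x ^ q - y ^ q := by
    intro x y; rw [hq]; exact sub_pow_char_pow ..
  have two_q : (2 : F) ^ q = 2 := by
    have := frobadd 1 1
    norm_num at this
    convert this using 2 <;> norm_num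
  have h2 : (2 : F) ≠ 0 := by
    intro h
    have : ((2 : ℕ) : F) = 0 := by push_cast; exact h
    have hd : p ∣ 2 := (CharP.cast_eq_zero_iff F p 2).1 this
    have := (Nat.prime_dvd_prime_iff_eq hp Nat.prime_two).1 hd
    exact hpodd this
  have hqq : ∀ x : F, (x ^ q) ^ q = x := by
    intro x
    rw [← pow_mul, ← sq, ← hF]
    exact FiniteField.pow_card x
  -- key value facts
  have hfsy : ∀ s' y : F, s' ^ q = s' → y ^ q = -y →
      f (s' + y) = -(2 * c * s' * (2 * y) ^ (n - 1)) := by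
    intro s' y hs' hy
    have hxq : (s' + y) ^ q = s' - y := by rw [frobadd, hs', hy]; ring
    have h1 : (s' - y) - (s' + y) = -(2 * y) := by ring
    rw [hf, hxq, h1, hn1odd.neg_pow]
    ring
  have hfval : ∀ x : F, (f x) ^ q = -f x := by
    intro x
    have h1 : (c * x ^ q + c * x) ^ q = c * x + c * x ^ q := by
      rw [frobadd, mul_pow, mul_pow, hc, hqq]
    have h2' : ((x ^ q - x) ^ (n - 1)) ^ q = -((x ^ q - x) ^ (n - 1)) := by
      rw [← pow_mul, mul_comm (n - 1) q, pow_mul, frobsub, hqq]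
      have : x - x ^ q = -(x ^ q - x) := by ring
      rw [this, hn1odd.neg_pow]
    rw [hf x, mul_pow, h1, h2']
    ring
  -- part (i)
  have part1 : ∀ x : F, f (f x) = 0 := by
    intro x
    have h0 : c * (f x) ^ q + c * f x = 0 := by rw [hfval]; ring
    rw [hf (f x), h0, zero_mul]
  -- zero set characterization
  have hzero : ∀ x : F, f x = 0 ↔ (x ^ q = x ∨ x ^ q = -x) := by
    intro x
    rw [hf x, mul_eq_zero, pow_eq_zero_iff hn1pos, sub_eq_zero]
    constructor
    · rintro (h | h)
      · right
        have h' : c * (x ^ q + x) = 0 := by linear_combination h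
        rcases mul_eq_zero.1 h' with h'' | h''
        · exact absurd h'' hc0
        · linear_combination h''
      · left; exact h
    · rintro (h | h)
      · right; exact h
      · left; rw [h]; ring
  have hset_eq : {x : F | f x = 0} = {x : F | x ^ q = x} ∪ {x : F | x ^ q = -x} := by
    ext x
    simp only [Set.mem_setOf_eq, Set.mem_union]
    exact hzero x
  set A : Set F := {x : F | x ^ q = x} with hA
  set K : Set F := {x : F | x ^ q = -x} with hK
  -- cardinalities of A and K
  have hAle : A.ncard ≤ q := by
    have := aux_root_card_le q hq2 (1 : F)
    simpa using this
  have hKle : K.ncard ≤ q := by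
    have := aux_root_card_le q hq2 (-1 : F)
    simpa [neg_mul, one_mul] using this
  have hbij : Function.Bijective (fun z : A × K => (z.1 : F) + (z.2 : F)) := by
    constructor
    · rintro ⟨⟨s1, hs1⟩, ⟨y1, hy1⟩⟩ ⟨⟨s2, hs2⟩, ⟨y2, hy2⟩⟩ h
      simp only at h
      have hs1' : s1 ^ q = s1 := hs1
      have hs2' : s2 ^ q = s2 := hs2
      have hy1' : y1 ^ q = -y1 := hy1
      have hy2' : y2 ^ q = -y2 := hy2
      have hq1 : (s1 + y1) ^ q = s1 - y1 := by rw [frobadd, hs1', hy1']; ring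
      have hq2' : (s2 + y2) ^ q = s2 - y2 := by rw [frobadd, hs2', hy2']; ring
      have h2' : s1 - y1 = s2 - y2 := by rw [← hq1, ← hq2', h]
      have hseq : s1 = s2 := by
        have h3 : 2 * s1 = 2 * s2 := by linear_combination h + h2'
        exact mul_left_cancel₀ h2 h3
      have hyeq : y1 = y2 := by
        have h3 : 2 * y1 = 2 * y2 := by linear_combination h - h2'
        exact mul_left_cancel₀ h2 h3
      simp [Prod.ext_iff, Subtype.ext_iff, hseq, hyeq]
    · intro x
      refine ⟨⟨⟨(x + x ^ q) / 2, ?_⟩, ⟨(x - x ^ q) / 2, ?_⟩⟩, ?_⟩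
      · show ((x + x ^ q) / 2) ^ q = (x + x ^ q) / 2
        rw [div_pow, frobadd, hqq, two_q]
        ring
      · show ((x - x ^ q) / 2) ^ q = -((x - x ^ q) / 2)
        rw [div_pow, frobsub, hqq, two_q]
        ring
      · show (x + x ^ q) / 2 + (x - x ^ q) / 2 = x
        field_simp
        ring
  have hprod : A.ncard * K.ncard = q ^ 2 := by
    have h1 : Nat.card (A × K) = Nat.card F := Nat.card_eq_of_bijective _ hbij
    rw [Nat.card_prod, Nat.card_coe_set_eq, Nat.card_coe_set_eq, Nat.card_eq_fintype_card,
      hF] at h1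
    exact h1
  have hAcard : A.ncard = q := by
    refine le_antisymm hAle ?_
    have h1 : q * q ≤ A.ncard * q := by
      calc q * q = q ^ 2 := (sq q).symm
        _ = A.ncard * K.ncard := hprod.symm
        _ ≤ A.ncard * q := Nat.mul_le_mul_left _ hKle
    exact Nat.le_of_mul_le_mul_right h1 (by omega)
  have hKcard : K.ncard = q := by
    refine le_antisymm hKle ?_
    have h1 : q * q ≤ K.ncard * q := by
      calc q * q = q ^ 2 := (sq q).symm
        _ = A.ncard * K.ncard := hprod.symm
        _ ≤ q * K.ncard := Nat.mul_le_mul_right _ hAle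
        _ = K.ncard * q := mul_comm _ _
    exact Nat.le_of_mul_le_mul_right h1 (by omega)
  have hAK : A ∩ K = {0} := by
    ext x
    simp only [Set.mem_inter_iff, hA, hK, Set.mem_setOf_eq, Set.mem_singleton_iff]
    constructor
    · rintro ⟨hx1, hx2⟩
      have h3 : 2 * x = 0 := by linear_combination hx2 - hx1
      rcases mul_eq_zero.1 h3 with h | h
      · exact absurd h h2
      · exact h
    · rintro rfl
      constructor <;> simp [zero_pow hq0]
  have hzero_card : {x : F | f x = 0}.ncard = 2 * q - 1 := by
    rw [hset_eq]
    have huni := Set.ncard_union_add_ncard_inter A K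
    rw [hAK, Set.ncard_singleton, hAcard, hKcard] at huni
    omega
  -- part (iii)
  have hzK : (0 : F) ∈ K := by simp [hK, zero_pow hq0]
  have hDq : ∀ y : F, y ^ q = -y →
      (2 * c * (2 * y) ^ (n - 1)) ^ q = -(2 * c * (2 * y) ^ (n - 1)) := by
    intro y hy
    rw [mul_pow, mul_pow, two_q, hc, ← pow_mul, mul_comm (n - 1) q, pow_mul, mul_pow, two_q, hy]
    have hh : (2 : F) * -y = -(2 * y) := by ring
    rw [hh, hn1odd.neg_pow]
    ring
  have hsq : ∀ α y : F, α ^ q = -α → y ^ q = -y →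
      (-α / (2 * c * (2 * y) ^ (n - 1))) ^ q = -α / (2 * c * (2 * y) ^ (n - 1)) := by
    intro α y hα hy
    rw [div_pow, hqodd.neg_pow, hα, neg_neg, hDq y hy, div_neg, ← neg_div]
  have hDne : ∀ y : F, y ≠ 0 → 2 * c * (2 * y) ^ (n - 1) ≠ 0 := by
    intro y hy0
    exact mul_ne_zero (mul_ne_zero h2 hc0) (pow_ne_zero _ (mul_ne_zero h2 hy0))
  have mem_fiber : ∀ α y : F, α ^ q = -α → α ≠ 0 → y ^ q = -y → y ≠ 0 →
      f (-α / (2 * c * (2 * y) ^ (n - 1)) + y) = α := by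
    intro α y hαq hα0 hyq hy0
    rw [hfsy _ _ (hsq α y hαq hyq) hyq]
    field_simp
  have fiber_eq : ∀ α : F, α ≠ 0 → α ^ q = -α →
      f ⁻¹' {α} = (fun y : F => -α / (2 * c * (2 * y) ^ (n - 1)) + y) '' (K \ {0}) := by
    intro α hα0 hαq
    ext x
    simp only [Set.mem_preimage, Set.mem_singleton_iff, Set.mem_image, Set.mem_diff, hK,
      Set.mem_setOf_eq, Set.mem_singleton_iff]
    constructor
    · intro hx
      set s' : F := (x + x ^ q) / 2 with hs'def
      set y : F := (x - x ^ q) / 2 with hydef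
      have hs'q : s' ^ q = s' := by
        rw [hs'def, div_pow, frobadd, hqq, two_q]; ring
      have hyq : y ^ q = -y := by
        rw [hydef, div_pow, frobsub, hqq, two_q]; ring
      have hxsy : x = s' + y := by rw [hs'def, hydef]; field_simp; ring
      have hy0 : y ≠ 0 := by
        intro h
        have hxx : x ^ q = x := by
          rw [hydef] at h
          have := (div_eq_zero_iff.1 h).resolve_right h2
          linear_combination -this
        have h0 : f x = 0 := (hzero x).2 (Or.inl hxx)
        rw [hx] at h0
        exact hα0 h0
      refine ⟨y, ⟨hyq, hy0⟩, ?_⟩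
      have hαval : α = -(2 * c * s' * (2 * y) ^ (n - 1)) := by
        rw [← hx, hxsy, hfsy _ _ hs'q hyq]
      have hDy := hDne y hy0
      rw [hxsy, hαval]
      field_simp
    · rintro ⟨y, ⟨hyq, hy0⟩, rfl⟩
      exact mem_fiber α y hαq hα0 hyq hy0
  have hKdiff : (K \ {0} : Set F).ncard = q - 1 := by
    rw [Set.ncard_diff_singleton_of_mem hzK, hKcard]
  have fiber_card : ∀ α : F, α ≠ 0 → α ^ q = -α → (f ⁻¹' {α}).ncard = q - 1 := by
    intro α hα0 hαq
    rw [fiber_eq α hα0 hαq, Set.ncard_image_of_injOn, hKdiff]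
    intro y1 hy1 y2 hy2 hxy
    simp only [Set.mem_diff, hK, Set.mem_setOf_eq, Set.mem_singleton_iff] at hy1 hy2
    have e1 : (-α / (2 * c * (2 * y1) ^ (n - 1)) + y1) ^ q
        = -α / (2 * c * (2 * y1) ^ (n - 1)) - y1 := by
      rw [frobadd, hsq α y1 hαq hy1.1, hy1.1]; ring
    have e2 : (-α / (2 * c * (2 * y2) ^ (n - 1)) + y2) ^ q
        = -α / (2 * c * (2 * y2) ^ (n - 1)) - y2 := by
      rw [frobadd, hsq α y2 hαq hy2.1, hy2.1]; ring
    have h3 : 2 * y1 = 2 * y2 := by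
      have := congrArg (fun t : F => t ^ q) hxy
      simp only at this
      rw [e1, e2] at this
      linear_combination hxy - this
    exact mul_left_cancel₀ h2 h3
  have hZ : {α : F | α ≠ 0 ∧ (f ⁻¹' {α}).Nonempty} = K \ {0} := by
    ext α
    simp only [Set.mem_setOf_eq, Set.mem_diff, hK, Set.mem_singleton_iff]
    constructor
    · rintro ⟨hα0, x, hx⟩
      simp only [Set.mem_preimage, Set.mem_singleton_iff] at hx
      exact ⟨by rw [← hx]; exact hfval x, hα0⟩
    · rintro ⟨hαK, hα0⟩
      refine ⟨hα0, ⟨-α / (2 * c * (2 * α) ^ (n - 1)) + α, ?_⟩⟩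
      simp only [Set.mem_preimage, Set.mem_singleton_iff]
      exact mem_fiber α α hαK hα0 hαK hα0
  refine ⟨part1, ⟨hset_eq, hzero_card⟩, ?_, ?_⟩
  · rw [hZ]; exact hKdiff
  · intro α hα0 hne
    obtain ⟨x, hx⟩ := hne
    simp only [Set.mem_preimage, Set.mem_singleton_iff] at hx
    exact fiber_card α hα0 (by rw [← hx]; exact hfval x)
end

section
/- Assume n is even, n ≥ 2, a = −c and c ≠ 0. Then: (i) f(f(X)) = 0 for every X ∈ F_{q^2}; (ii) {X ∈ F_{q^2} : f(X) = 0} = {X : X^q = X}, which is the subfield F_q and has exactly q elements; (iii) there are exactly (q−1)/𝔤(n) nonzero elements α ∈ F_{q^2} with f^{-1}(α) nonempty, and for each such α one has #f^{-1}(α) = q·𝔤(n). -/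
/-! With `q = p ^ s`, the Artin–Schreier map `℘ X = X ^ q - X` is additive, its kernel is `𝔽_q`
and its image lies in `S = {y | y ^ q = -y}`. Both `𝔽_q` and `S` are root sets of polynomials of
degree `q`, so `|ker ℘| · |im ℘| = q ^ 2` forces `|ker ℘| = q` and `im ℘ = S`: `℘` is `q`-to-one
onto `S`. Since `a = -c`, `f = c · ℘ ^ n`; for even `n` its values lie in `𝔽_q = ker ℘`, which
gives (i) and (ii). The nonzero elements of `S` are the `y` with `y ^ (q - 1) = -1`, a coset of
`𝔽_q^×`, and on it `y ^ n = y₀ ^ n` iff `y / y₀` is a `gcd(n, q - 1)`-th root of unity. Hence every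
nonempty fibre of `f` over `α ≠ 0` has `q · gcd(n, q - 1)` elements, and these fibres partition
`F \ 𝔽_q`. -/

open Polynomial in
theorem ncard_setOf_pow_eq_mul_le {R : Type*} [CommRing R] [IsDomain R] {m : ℕ} (hm : 2 ≤ m)
    (u : R) : {x : R | x ^ m = u * x}.ncard ≤ m := by
  classical
  set P : R[X] := X ^ m - C u * X
  have hdeg : P.natDegree = m := by
    unfold P
    compute_degree! <;> first | omega | simp [show m ≠ 1 by omega]
  have hP : P ≠ 0 := by rintro h; rw [h, natDegree_zero] at hdeg; omega
  have hroots : {x : R | x ^ m = u * x} = ↑P.roots.toFinset := by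
    ext x; simp [P, hP, sub_eq_zero]
  rw [hroots, Set.ncard_coe_finset, ← hdeg]
  exact (Multiset.toFinset_card_le _).trans P.card_roots'

open Polynomial in
theorem FiniteField.ncard_setOf_pow_eq_one {K : Type*} [Field K] [Fintype K] {m : ℕ} (hm : 0 < m)
    (hdvd : m ∣ Fintype.card K - 1) : {x : K | x ^ m = 1}.ncard = m := by
  classical
  obtain ⟨g, hg⟩ := IsCyclic.exists_generator (α := Kˣ)
  have hζ : IsPrimitiveRoot (g : K) (Fintype.card K - 1) := by
    rw [← Fintype.card_units, ← Nat.card_eq_fintype_card,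
      ← orderOf_eq_card_of_forall_mem_zpowers hg, ← orderOf_units]
    exact IsPrimitiveRoot.orderOf _
  obtain ⟨k, hk⟩ := hdvd
  have hζm : IsPrimitiveRoot ((g : K) ^ k) m :=
    hζ.pow (by have := Fintype.one_lt_card (α := K); omega) (by rw [hk, mul_comm])
  have hroots : {x : K | x ^ m = 1} = ↑(nthRootsFinset m (1 : K)) := by
    ext x; simp [mem_nthRootsFinset hm]
  rw [hroots, Set.ncard_coe_finset, hζm.card_nthRootsFinset]

theorem pow_sub_one_eq_neg_one_iff {R : Type*} [Ring R] [IsDomain R] {k : ℕ} (hk : 2 ≤ k) {y : R} :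
    y ^ (k - 1) = -1 ↔ y ≠ 0 ∧ y ^ k = -y := by
  have hsucc : y ^ k = y ^ (k - 1) * y := by rw [← pow_succ, Nat.sub_add_cancel (by omega)]
  constructor
  · intro h
    refine ⟨?_, by rw [hsucc, h, neg_one_mul]⟩
    rintro rfl
    rw [zero_pow (by omega)] at h
    exact one_ne_zero (neg_eq_zero.mp h.symm)
  · rintro ⟨hy, hk⟩
    exact mul_right_cancel₀ hy (by rw [← hsucc, hk, neg_one_mul])

theorem setOf_pow_eq_pow_and_pow_eq_pow {G₀ : Type*} [CommGroupWithZero G₀] {y₀ : G₀}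
    (hy₀ : y₀ ≠ 0) (m n : ℕ) :
    {y | y ^ m = y₀ ^ m ∧ y ^ n = y₀ ^ n} = (· * y₀) '' {t | t ^ Nat.gcd m n = 1} := by
  ext y
  simp only [Set.mem_ofPred_eq, Set.mem_image, pow_gcd_eq_one]
  constructor
  · rintro ⟨hm, hn⟩
    refine ⟨y / y₀, ⟨?_, ?_⟩, div_mul_cancel₀ y hy₀⟩ <;>
      rwa [div_pow, div_eq_one_iff_eq (pow_ne_zero _ hy₀)]
  · rintro ⟨t, ⟨htm, htn⟩, rfl⟩
    simp [mul_pow, htm, htn]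

theorem Set.ncard_preimage_of_forall_ncard_fiber {α β : Type*} [Finite α] [Finite β] (f : α → β)
    {B : Set β} {k : ℕ} (hB : ∀ b ∈ B, (f ⁻¹' {b}).ncard = k) : (f ⁻¹' B).ncard = B.ncard * k := by
  classical
  have := Fintype.ofFinite α
  have := Fintype.ofFinite β
  rw [Set.ncard_eq_toFinset_card', Set.ncard_eq_toFinset_card',
    Finset.card_eq_sum_card_fiberwise (f := f) (t := B.toFinset) (by intro x; simp),
    Finset.sum_const_nat]
  intro b hb
  rw [← hB b (by simpa using hb), Set.ncard_eq_toFinset_card']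
  congr 1; ext; simp_all

theorem AddMonoidHom.ncard_preimage_singleton {G H : Type*} [AddGroup G] [AddGroup H] (φ : G →+ H)
    {y : H} (hy : y ∈ φ.range) : (φ ⁻¹' {y}).ncard = (φ.ker : Set G).ncard := by
  obtain ⟨x₀, rfl⟩ := hy
  have : φ ⁻¹' {φ x₀} = (x₀ + ·) '' φ.ker := by
    ext x
    simp only [Set.mem_preimage, Set.mem_singleton_iff, Set.mem_image, SetLike.mem_coe,
      AddMonoidHom.mem_ker]
    constructor
    · intro h
      exact ⟨-x₀ + x, by simp [h], add_neg_cancel_left x₀ x⟩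
    · rintro ⟨t, ht, rfl⟩
      simp [ht]
  rw [this, Set.ncard_image_of_injective _ (add_right_injective x₀)]

theorem AddMonoidHom.ncard_ker_eq_and_range_eq {G H : Type*} [AddGroup G] [Finite G] [AddGroup H]
    [Finite H] (φ : G →+ H) {S : Set H} {k : ℕ} (hG : Nat.card G = k ^ 2)
    (hker : (φ.ker : Set G).ncard ≤ k) (hrange : (φ.range : Set H) ⊆ S) (hS : S.ncard ≤ k) :
    (φ.ker : Set G).ncard = k ∧ (φ.range : Set H) = S := by
  have hprod : (φ.ker : Set G).ncard * (φ.range : Set H).ncard = k ^ 2 := by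
    rw [← hG, ← φ.ker.card_mul_index, AddSubgroup.index_ker, ← Nat.card_coe_set_eq,
      ← Nat.card_coe_set_eq]
    rfl
  have hrange_le : (φ.range : Set H).ncard ≤ k := (Set.ncard_le_ncard hrange).trans hS
  have hker_eq : (φ.ker : Set G).ncard = k := by nlinarith
  refine ⟨hker_eq, Set.eq_of_subset_of_ncard_le hrange (hS.trans ?_)⟩
  nlinarith

theorem FiniteField.pow_pow_eq_self_of_card_eq_sq {K : Type*} [Field K] [Fintype K] {q : ℕ}
    (hK : Fintype.card K = q ^ 2) (x : K) : (x ^ q) ^ q = x := by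
  rw [← pow_mul, ← sq, ← hK, FiniteField.pow_card]

theorem Fintype.two_le_of_card_eq_sq {α : Type*} [Fintype α] [Nontrivial α] {k : ℕ}
    (hα : Fintype.card α = k ^ 2) : 2 ≤ k := by
  have := Fintype.one_lt_card (α := α)
  by_contra! h
  interval_cases k <;> simp_all

section ArtinSchreier

variable (R : Type*) [CommRing R] (p s : ℕ) [ExpChar R p]

def artinSchreier : R →+ R := (iterateFrobenius R p s : R →+ R) - AddMonoidHom.id R

variable {R p s}

@[simp]
theorem artinSchreier_apply (x : R) : artinSchreier R p s x = x ^ p ^ s - x := rfl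

theorem mem_ker_artinSchreier {x : R} : x ∈ (artinSchreier R p s).ker ↔ x ^ p ^ s = x := by
  simp [sub_eq_zero]

variable {F : Type*} [Field F] [ExpChar F p]

theorem mul_artinSchreier_pow_eq_zero_iff {c : F} (hc : c ≠ 0) {n : ℕ} (hn : n ≠ 0) {x : F} :
    c * artinSchreier F p s x ^ n = 0 ↔ x ^ p ^ s = x := by
  simp [hc, hn, sub_eq_zero]

variable [Fintype F]

theorem artinSchreier_pow (hF : Fintype.card F = (p ^ s) ^ 2) (x : F) :
    artinSchreier F p s x ^ p ^ s = -artinSchreier F p s x := by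
  simp [sub_pow_expChar_pow, FiniteField.pow_pow_eq_self_of_card_eq_sq hF]

theorem ncard_ker_artinSchreier_and_range (hF : Fintype.card F = (p ^ s) ^ 2) :
    ((artinSchreier F p s).ker : Set F).ncard = p ^ s ∧
      ((artinSchreier F p s).range : Set F) = {y | y ^ p ^ s = -y} := by
  have hq := Fintype.two_le_of_card_eq_sq hF
  refine (artinSchreier F p s).ncard_ker_eq_and_range_eq
    (by rwa [Nat.card_eq_fintype_card]) ?_ ?_ ?_
  · convert ncard_setOf_pow_eq_mul_le hq (1 : F) using 2
    ext
    simp [sub_eq_zero]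
  · rintro _ ⟨x, rfl⟩
    exact artinSchreier_pow hF x
  · convert ncard_setOf_pow_eq_mul_le hq (-1 : F) using 3
    simp

theorem ncard_preimage_artinSchreier (hF : Fintype.card F = (p ^ s) ^ 2) {y : F}
    (hy : y ^ p ^ s = -y) : (artinSchreier F p s ⁻¹' {y}).ncard = p ^ s := by
  obtain ⟨hker, hrange⟩ := ncard_ker_artinSchreier_and_range hF
  rw [AddMonoidHom.ncard_preimage_singleton _ (by rw [← SetLike.mem_coe, hrange]; exact hy), hker]

theorem mul_artinSchreier_pow_pow (hF : Fintype.card F = (p ^ s) ^ 2) {c : F} (hc : c ^ p ^ s = c)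
    {n : ℕ} (hn : Even n) (x : F) :
    (c * artinSchreier F p s x ^ n) ^ p ^ s = c * artinSchreier F p s x ^ n := by
  rw [mul_pow, ← pow_mul, mul_comm n, pow_mul, artinSchreier_pow hF, hn.neg_pow, hc]

theorem ncard_preimage_mul_artinSchreier_pow (hF : Fintype.card F = (p ^ s) ^ 2) {c : F}
    (hc : c ≠ 0) {n : ℕ} (hn : n ≠ 0) {x₀ : F} (hx₀ : c * artinSchreier F p s x₀ ^ n ≠ 0) :
    ((fun x => c * artinSchreier F p s x ^ n) ⁻¹' {c * artinSchreier F p s x₀ ^ n}).ncard =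
      p ^ s * Nat.gcd n (p ^ s - 1) := by
  have hq := Fintype.two_le_of_card_eq_sq hF
  set y₀ := artinSchreier F p s x₀
  have hy₀ : y₀ ≠ 0 := ne_zero_pow hn (right_ne_zero_of_mul hx₀)
  have hy₀q : y₀ ^ (p ^ s - 1) = -1 :=
    (pow_sub_one_eq_neg_one_iff hq).2 ⟨hy₀, artinSchreier_pow hF x₀⟩
  have hpre : (fun x => c * artinSchreier F p s x ^ n) ⁻¹' {c * y₀ ^ n} =
      artinSchreier F p s ⁻¹' {y | y ^ n = y₀ ^ n ∧ y ^ (p ^ s - 1) = y₀ ^ (p ^ s - 1)} := by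
    ext x
    simp only [Set.mem_preimage, Set.mem_singleton_iff, Set.mem_ofPred_eq, mul_right_inj' hc,
      hy₀q, iff_self_and]
    intro hx
    refine (pow_sub_one_eq_neg_one_iff hq).2 ⟨fun h => ?_, artinSchreier_pow hF x⟩
    rw [h, zero_pow hn] at hx
    exact pow_ne_zero n hy₀ hx.symm
  have hgcd : Nat.gcd n (p ^ s - 1) ∣ Fintype.card F - 1 :=
    (Nat.gcd_dvd_right _ _).trans (hF ▸ Nat.sub_one_dvd_pow_sub_one _ _)
  rw [hpre, Set.ncard_preimage_of_forall_ncard_fiber _ (k := p ^ s),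
    setOf_pow_eq_pow_and_pow_eq_pow hy₀, Set.ncard_image_of_injective _ (mul_left_injective₀ hy₀),
    FiniteField.ncard_setOf_pow_eq_one (Nat.gcd_pos_of_pos_right _ (by omega)) hgcd, mul_comm]
  rintro y ⟨-, hy⟩
  exact ncard_preimage_artinSchreier hF ((pow_sub_one_eq_neg_one_iff hq).1 (hy.trans hy₀q)).2

theorem ncard_setOf_ne_zero_preimage_nonempty (hF : Fintype.card F = (p ^ s) ^ 2) {c : F}
    (hc : c ≠ 0) {n : ℕ} (hn : n ≠ 0) :
    {α | α ≠ 0 ∧ ((fun x => c * artinSchreier F p s x ^ n) ⁻¹' {α}).Nonempty}.ncard =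
      (p ^ s - 1) / Nat.gcd n (p ^ s - 1) := by
  set f := fun x => c * artinSchreier F p s x ^ n
  set V := {α | α ≠ 0 ∧ (f ⁻¹' {α}).Nonempty}
  have hfib : ∀ α ∈ V, (f ⁻¹' {α}).ncard = p ^ s * Nat.gcd n (p ^ s - 1) := by
    rintro _ ⟨hα, x₀, rfl⟩
    exact ncard_preimage_mul_artinSchreier_pow hF hc hn hα
  have hV : f ⁻¹' V = ((artinSchreier F p s).ker : Set F)ᶜ := by
    ext x
    change f x ≠ 0 ∧ (f ⁻¹' {f x}).Nonempty ↔ x ∉ (artinSchreier F p s).ker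
    rw [mem_ker_artinSchreier, ← mul_artinSchreier_pow_eq_zero_iff hc hn]
    exact and_iff_left ⟨x, rfl⟩
  have hcount := Set.ncard_preimage_of_forall_ncard_fiber f hfib
  rw [hV, Set.ncard_compl, (ncard_ker_artinSchreier_and_range hF).1, Nat.card_eq_fintype_card,
    hF, sq, ← Nat.mul_sub_one, mul_left_comm] at hcount
  have hq := Fintype.two_le_of_card_eq_sq hF
  exact (Nat.div_eq_of_eq_mul_left (Nat.gcd_pos_of_pos_right _ (by omega))
    (Nat.eq_of_mul_eq_mul_left (by omega) hcount)).symm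

end ArtinSchreier

theorem stmt_1_general (p s q : ℕ) (hp : p.Prime) (hq : q = p ^ s)
    (F : Type*) [Field F] [Fintype F] (hF : Fintype.card F = q ^ 2)
    (a c : F) (hc : c ^ q = c)
    (n : ℕ) (hn2 : 2 ≤ n) (hneven : Even n)
    (hac : a = -c) (hc0 : c ≠ 0)
    (f : F → F) (hf : ∀ X, f X = (c * X ^ q + a * X) * (X ^ q - X) ^ (n - 1)) :
    (∀ X : F, f (f X) = 0) ∧
    ({X : F | f X = 0} = {X : F | X ^ q = X} ∧
      {X : F | f X = 0}.ncard = q) ∧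
    ({α : F | α ≠ 0 ∧ (f ⁻¹' {α}).Nonempty}.ncard = (q - 1) / Nat.gcd n (q - 1) ∧
      ∀ α : F, α ≠ 0 → (f ⁻¹' {α}).Nonempty →
        (f ⁻¹' {α}).ncard = q * Nat.gcd n (q - 1)) := by
  subst hq hac
  have : Fact p.Prime := ⟨hp⟩
  have : CharP F p := charP_of_card_eq_prime_pow (f := s * 2) (by rw [hF, pow_mul])
  have hn : n ≠ 0 := by omega
  obtain rfl : f = fun X => c * artinSchreier F p s X ^ n := by
    funext X
    rw [hf, artinSchreier_apply, show c * X ^ p ^ s + -c * X = c * (X ^ p ^ s - X) by ring,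
      mul_assoc, ← pow_succ', Nat.sub_one_add_one hn]
  have hker : ((artinSchreier F p s).ker : Set F) = {X | X ^ p ^ s = X} :=
    Set.ext fun _ => mem_ker_artinSchreier
  have hzero : {X | c * artinSchreier F p s X ^ n = 0} = {X : F | X ^ p ^ s = X} :=
    Set.ext fun _ => mul_artinSchreier_pow_eq_zero_iff hc0 hn
  refine ⟨fun X => ?_, ⟨hzero, ?_⟩, ncard_setOf_ne_zero_preimage_nonempty hF hc0 hn, ?_⟩
  · exact (mul_artinSchreier_pow_eq_zero_iff hc0 hn).2 (mul_artinSchreier_pow_pow hF hc hneven X)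
  · rw [hzero, ← hker]
    exact (ncard_ker_artinSchreier_and_range hF).1
  · rintro α hα ⟨X₀, rfl⟩
    exact ncard_preimage_mul_artinSchreier_pow hF hc0 hn hα

/-- `n` even, `n ≥ 2`, `a = -c`, `c ≠ 0`. Then (i) `f ∘ f ≡ 0`;
(ii) the zero set of `f` is the subfield `F_q = {X : X^q = X}`, with `q` elements;
(iii) there are exactly `(q-1)/𝔤(n)` nonzero `α` with nonempty preimage, each of
size `q·𝔤(n)`. -/
theorem stmt_1 (p s q : ℕ) (hp : p.Prime) (hpodd : p ≠ 2) (hs : 0 < s) (hq : q = p ^ s)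
    (F : Type*) [Field F] [Fintype F] (hF : Fintype.card F = q ^ 2)
    (a c : F) (ha : a ^ q = a) (hc : c ^ q = c)
    (n : ℕ) (hn2 : 2 ≤ n) (hneven : Even n)
    (hac : a = -c) (hc0 : c ≠ 0)
    (f : F → F) (hf : ∀ X, f X = (c * X ^ q + a * X) * (X ^ q - X) ^ (n - 1)) :
    (∀ X : F, f (f X) = 0) ∧
    ({X : F | f X = 0} = {X : F | X ^ q = X} ∧
      {X : F | f X = 0}.ncard = q) ∧
    ({α : F | α ≠ 0 ∧ (f ⁻¹' {α}).Nonempty}.ncard = (q - 1) / Nat.gcd n (q - 1) ∧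
      ∀ α : F, α ≠ 0 → (f ⁻¹' {α}).Nonempty →
        (f ⁻¹' {α}).ncard = q * Nat.gcd n (q - 1)) :=
  stmt_1_general p s q hp hq F hF a c hc n hn2 hneven hac hc0 f hf
end

section
/- Assume n is even, n ≥ 2, and a^2 ≠ c^2. Then: (i) {X ∈ F_{q^2} : f(X) = 0} = {X : X^q = X}, which has exactly q elements; (ii) exactly (q−1)/𝔤(n) of the q−1 nonzero elements u with u^q = u have f^{-1}(u) nonempty; (iii) for each such u one has #f^{-1}(u) = 𝔤(n); (iv) every Y ∈ F_{q^2} with f(Y) ≠ 0 and f(f(Y)) = 0 has f^{-1}(Y) = ∅. -/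
/-! Write `σ X = X ^ q`, an involutive automorphism of `F_{q²}` with fixed field `F_q`, so that
`f X = (c σX + aX)(σX - X)^(n-1)`. As `n - 1` is odd, `σ (f X) = -(cX + aσX)(σX - X)^(n-1)`.
Comparing this with `± f X` (and using `a ≠ ±c`) shows that `f X = 0` iff `X ∈ F_q`, that a
nonzero value `f X` is never anti-fixed (`σ u = -u`), and that a nonzero fixed value is attained
only at anti-fixed `X`, where `f X = (a - c)(-2)^(n-1) X^n`. The nonzero anti-fixed elements form
a coset `δ F_q^×`, so `f` maps these `q - 1` points onto the attained fixed values, each fiber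
being `X₀` times the `n`-th roots of unity in `F_q`, of which there are `gcd(n, q - 1)`. Finally, if
`f (f Y) = 0 ≠ f Y` then `Y` is anti-fixed, so it is not a nonzero value of `f`. -/

open Function

lemma add_ne_zero_of_sq_ne_sq {R : Type*} [CommRing R] {a c : R} (h : a ^ 2 ≠ c ^ 2) :
    a + c ≠ 0 :=
  fun h' => h (by rw [eq_neg_of_add_eq_zero_left h', neg_sq])

lemma pow_eq_self_iff {M₀ : Type*} [MonoidWithZero M₀] [IsCancelMulZero M₀] {x : M₀}
    {q : ℕ} (hq : q ≠ 0) : x ^ q = x ↔ x = 0 ∨ x ^ (q - 1) = 1 := by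
  rcases eq_or_ne x 0 with rfl | hx
  · simp [zero_pow hq]
  · rw [← pow_sub_one_mul hq, mul_eq_right₀ hx]
    simp [hx]

lemma Set.ncard_eq_ncard_image_mul {α β : Type*} {f : α → β} {s : Set α} (hs : s.Finite)
    {k : ℕ} (h : ∀ b ∈ f '' s, (s ∩ f ⁻¹' {b}).ncard = k) : s.ncard = (f '' s).ncard * k := by
  classical
  lift s to Finset α using hs
  rw [← Finset.coe_image, Set.ncard_coe_finset, Set.ncard_coe_finset,
    Finset.card_eq_sum_card_image f s, Finset.sum_const_nat]
  intro b hb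
  rw [← h b (by simpa using hb), ← Set.ncard_coe_finset, Finset.coe_filter]
  rfl

section TwistedMap

variable {F : Type*} [Field F] (σ : F →+* F) (a c : F) (n : ℕ)

def twistedMap (X : F) : F := (c * σ X + a * X) * (σ X - X) ^ (n - 1)

variable {σ a c n}

lemma map_mul_eq_neg_iff {X₀ : F} (hX₀ : σ X₀ = -X₀) (h0 : X₀ ≠ 0) {y : F} :
    σ (X₀ * y) = -(X₀ * y) ↔ σ y = y := by
  rw [map_mul, hX₀, neg_mul, neg_inj, mul_right_inj' h0]

lemma ncard_preimage_mul_left {X₀ : F} (h0 : X₀ ≠ 0) (s : Set F) :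
    ((X₀ * ·) ⁻¹' s).ncard = s.ncard :=
  Set.ncard_preimage_of_injective_subset_range (mul_right_injective₀ h0)
    (by simp [(mulLeft_bijective₀ X₀ h0).surjective.range_eq])

lemma map_sub_self (hσ : Involutive σ) (X : F) : σ (σ X - X) = -(σ X - X) := by
  rw [map_sub, hσ X, neg_sub]

@[simp]
lemma twistedMap_zero : twistedMap σ a c n 0 = 0 := by
  simp [twistedMap]

lemma map_twistedMap (hσ : Involutive σ) (ha : σ a = a) (hc : σ c = c) (hn : Odd (n - 1))
    (X : F) : σ (twistedMap σ a c n X) = -((c * X + a * σ X) * (σ X - X) ^ (n - 1)) := by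
  rw [twistedMap, map_mul, map_pow, map_sub_self hσ, hn.neg_pow, map_add, map_mul, map_mul, ha, hc,
    hσ X]
  ring

lemma twistedMap_of_map_eq_neg (hn : n ≠ 0) {X : F} (hX : σ X = -X) :
    twistedMap σ a c n X = (a - c) * (-2) ^ (n - 1) * X ^ n := by
  obtain ⟨m, rfl⟩ := Nat.exists_eq_add_one_of_ne_zero hn
  rw [twistedMap, hX, Nat.add_sub_cancel]
  ring

lemma twistedMap_eq_zero_iff (hσ : Involutive σ) (ha : σ a = a) (hc : σ c = c)
    (hac : a ^ 2 ≠ c ^ 2) (hn : n - 1 ≠ 0) {X : F} :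
    twistedMap σ a c n X = 0 ↔ σ X = X := by
  rw [twistedMap, mul_eq_zero, pow_eq_zero_iff hn, sub_eq_zero, or_iff_right_of_imp]
  intro h
  have h' : c * X + a * σ X = 0 := by simpa [ha, hc, hσ X] using congrArg σ h
  have hX : (a ^ 2 - c ^ 2) * X = 0 := by linear_combination a * h - c * h'
  rw [(mul_eq_zero.mp hX).resolve_left (sub_ne_zero.mpr hac), map_zero]

lemma map_eq_neg_of_map_twistedMap_eq (hσ : Involutive σ) (ha : σ a = a) (hc : σ c = c)
    (hac : a + c ≠ 0) (hn : Odd (n - 1)) {X : F} (h0 : twistedMap σ a c n X ≠ 0)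
    (hfix : σ (twistedMap σ a c n X) = twistedMap σ a c n X) : σ X = -X := by
  have hd : (σ X - X) ^ (n - 1) ≠ 0 := right_ne_zero_of_mul h0
  rw [map_twistedMap hσ ha hc hn, twistedMap] at hfix
  have h : (a + c) * (σ X + X) * (σ X - X) ^ (n - 1) = 0 := by linear_combination -hfix
  exact eq_neg_of_add_eq_zero_left
    ((mul_eq_zero.mp ((mul_eq_zero.mp h).resolve_right hd)).resolve_left hac)

lemma twistedMap_eq_zero_of_map_eq_neg (hσ : Involutive σ) (ha : σ a = a) (hc : σ c = c)
    (hac : a ≠ c) (hn : Odd (n - 1)) {X : F}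
    (h : σ (twistedMap σ a c n X) = -twistedMap σ a c n X) : twistedMap σ a c n X = 0 := by
  by_contra h0
  have hd : (σ X - X) ^ (n - 1) ≠ 0 := right_ne_zero_of_mul h0
  rw [map_twistedMap hσ ha hc hn, twistedMap] at h
  have h' : (a - c) * (σ X - X) * (σ X - X) ^ (n - 1) = 0 := by linear_combination -h
  exact mul_ne_zero (mul_ne_zero (sub_ne_zero.mpr hac) (ne_zero_pow hn.pos.ne' hd)) hd h'

lemma preimage_twistedMap_singleton (hσ : Involutive σ) (ha : σ a = a) (hc : σ c = c)
    (hac : a + c ≠ 0) (hn : Odd (n - 1)) {u : F} (hu0 : u ≠ 0) (hu : σ u = u) :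
    twistedMap σ a c n ⁻¹' {u} = {X | σ X = -X ∧ (a - c) * (-2) ^ (n - 1) * X ^ n = u} := by
  have hn0 : n ≠ 0 := by have := hn.pos; omega
  ext X
  constructor
  · rintro (hX : twistedMap σ a c n X = u)
    have hneg : σ X = -X :=
      map_eq_neg_of_map_twistedMap_eq hσ ha hc hac hn (hX ▸ hu0) (by rw [hX, hu])
    exact ⟨hneg, (twistedMap_of_map_eq_neg hn0 hneg).symm.trans hX⟩
  · rintro ⟨hneg, hX⟩
    exact (twistedMap_of_map_eq_neg hn0 hneg).trans hX

lemma twistedMap_ne_zero_of_map_eq_neg (hac : a ≠ c) (h2 : (2 : F) ≠ 0) (hn : n ≠ 0) {X : F}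
    (hX : σ X = -X) (hX0 : X ≠ 0) : twistedMap σ a c n X ≠ 0 := by
  rw [twistedMap_of_map_eq_neg hn hX]
  exact mul_ne_zero (mul_ne_zero (sub_ne_zero.mpr hac) (pow_ne_zero _ (neg_ne_zero.mpr h2)))
    (pow_ne_zero _ hX0)

lemma map_twistedMap_of_map_eq_neg (ha : σ a = a) (hc : σ c = c) (hn : Even n) (hn0 : n ≠ 0)
    {X : F} (hX : σ X = -X) : σ (twistedMap σ a c n X) = twistedMap σ a c n X := by
  simp only [twistedMap_of_map_eq_neg hn0 hX, map_mul, map_pow, map_sub, map_neg, map_ofNat, ha,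
    hc, hX, hn.neg_pow]

lemma ncard_preimage_twistedMap_singleton (hσ : Involutive σ) (ha : σ a = a) (hc : σ c = c)
    (hac : a + c ≠ 0) (hn : Odd (n - 1)) {u : F} (hu0 : u ≠ 0)
    (hu : σ u = u) (hne : (twistedMap σ a c n ⁻¹' {u}).Nonempty) :
    (twistedMap σ a c n ⁻¹' {u}).ncard = {y | σ y = y ∧ y ^ n = 1}.ncard := by
  have hn0 : n ≠ 0 := by have := hn.pos; omega
  obtain ⟨X₀, hX₀⟩ := hne
  rw [preimage_twistedMap_singleton hσ ha hc hac hn hu0 hu] at hX₀ ⊢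
  obtain ⟨hX₀neg, rfl⟩ := hX₀
  have hX₀0 : X₀ ≠ 0 := by
    rintro rfl
    exact hu0 (by rw [zero_pow hn0, mul_zero])
  rw [← ncard_preimage_mul_left hX₀0]
  congr 1
  ext y
  simp only [Set.mem_preimage, Set.mem_ofPred_eq, map_mul_eq_neg_iff hX₀neg hX₀0, mul_pow,
    ← mul_assoc, mul_eq_left₀ hu0]

lemma preimage_twistedMap_singleton_eq_empty (hσ : Involutive σ) (ha : σ a = a) (hc : σ c = c)
    (hac : a ^ 2 ≠ c ^ 2) (hn : Odd (n - 1)) {Y : F} (hY0 : twistedMap σ a c n Y ≠ 0)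
    (hY : twistedMap σ a c n (twistedMap σ a c n Y) = 0) :
    twistedMap σ a c n ⁻¹' {Y} = ∅ := by
  have hYfix := (twistedMap_eq_zero_iff hσ ha hc hac hn.pos.ne').mp hY
  have hYneg : σ Y = -Y := map_eq_neg_of_map_twistedMap_eq hσ ha hc
    (add_ne_zero_of_sq_ne_sq hac) hn hY0 hYfix
  refine Set.eq_empty_of_forall_notMem fun X (hX : twistedMap σ a c n X = Y) => hY0 ?_
  have hX0 : twistedMap σ a c n X = 0 := twistedMap_eq_zero_of_map_eq_neg hσ ha hc
    (fun h => hac (by rw [h])) hn (by rw [hX, hYneg])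
  rw [← hX, hX0, twistedMap_zero]

lemma ncard_fixed_values_twistedMap [Finite F] (hσ : Involutive σ) (ha : σ a = a) (hc : σ c = c)
    (hac : a ^ 2 ≠ c ^ 2) (h2 : (2 : F) ≠ 0) (hn : Even n) (hn0 : n ≠ 0) {q : ℕ}
    (hq : {x : F | σ x = x}.ncard = q) (hqF : q < Nat.card F)
    {g : ℕ} (hg : {y : F | σ y = y ∧ y ^ n = 1}.ncard = g) :
    {u | u ≠ 0 ∧ σ u = u ∧ (twistedMap σ a c n ⁻¹' {u}).Nonempty}.ncard =
      (q - 1) / g := by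
  have hsub : a ≠ c := fun h => hac (by rw [h])
  have hadd : a + c ≠ 0 := add_ne_zero_of_sq_ne_sq hac
  have hodd : Odd (n - 1) := Nat.Even.sub_odd (Nat.one_le_iff_ne_zero.mpr hn0) hn odd_one
  set S : Set F := {X | σ X = -X} \ {0}
  have hfiber_sub {u : F} (hu0 : u ≠ 0) (hu : σ u = u) :
      twistedMap σ a c n ⁻¹' {u} ⊆ S := by
    intro X (hX : twistedMap σ a c n X = u)
    refine ⟨((preimage_twistedMap_singleton hσ ha hc hadd hodd hu0 hu).subset hX).1,
      fun hX0 => hu0 ?_⟩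
    rw [← hX, Set.mem_singleton_iff.mp hX0, twistedMap_zero]
  have hU : {u | u ≠ 0 ∧ σ u = u ∧ (twistedMap σ a c n ⁻¹' {u}).Nonempty} =
      twistedMap σ a c n '' S := by
    ext u
    constructor
    · rintro ⟨hu0, hu, X, hX⟩
      exact ⟨X, hfiber_sub hu0 hu hX, hX⟩
    · rintro ⟨X, ⟨hXneg, hX0⟩, rfl⟩
      exact ⟨twistedMap_ne_zero_of_map_eq_neg hsub h2 hn0 hXneg hX0,
        map_twistedMap_of_map_eq_neg ha hc hn hn0 hXneg, X, rfl⟩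
  have hS : S.ncard = q - 1 := by
    obtain ⟨X, hX⟩ : ∃ X, σ X ≠ X := by
      by_contra! h
      have huniv : {x : F | σ x = x} = Set.univ := Set.eq_univ_of_forall h
      rw [huniv, Set.ncard_univ] at hq
      omega
    have hδ := sub_ne_zero.mpr hX
    rw [Set.ncard_sdiff_singleton_of_mem (by simp), ← hq, ← ncard_preimage_mul_left hδ]
    congr 2
    ext y
    exact map_mul_eq_neg_iff (map_sub_self hσ X) hδ
  have hfib :
      ∀ u ∈ twistedMap σ a c n '' S, (S ∩ twistedMap σ a c n ⁻¹' {u}).ncard = g := by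
    intro u hu
    obtain ⟨hu0, hufix, hne⟩ := hU.symm.subset hu
    rw [Set.inter_eq_right.mpr (hfiber_sub hu0 hufix),
      ncard_preimage_twistedMap_singleton hσ ha hc hadd hodd hu0 hufix hne, hg]
  have hg0 : 0 < g := hg ▸ (Set.ncard_pos (Set.toFinite _)).mpr ⟨1, map_one σ, one_pow n⟩
  rw [hU, Nat.div_eq_of_eq_mul_left hg0 (hS ▸ Set.ncard_eq_ncard_image_mul (Set.toFinite S) hfib)]

end TwistedMap

section FiniteField

variable {F : Type*} [Field F] [Fintype F]

lemma FiniteField.exists_isPrimitiveRoot_card_sub_one :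
    ∃ ζ : F, IsPrimitiveRoot ζ (Fintype.card F - 1) := by
  classical
  obtain ⟨g, hg⟩ := IsCyclic.exists_generator (α := Fˣ)
  refine ⟨g, ?_⟩
  rw [← Fintype.card_units, ← Nat.card_eq_fintype_card,
    ← orderOf_eq_card_of_forall_mem_zpowers hg, ← orderOf_units]
  exact IsPrimitiveRoot.orderOf _

lemma FiniteField.ncard_pow_eq_one {d : ℕ} (hd0 : d ≠ 0) (hd : d ∣ Fintype.card F - 1) :
    {x : F | x ^ d = 1}.ncard = d := by
  classical
  obtain ⟨ζ, hζ⟩ := FiniteField.exists_isPrimitiveRoot_card_sub_one (F := F)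
  obtain ⟨e, he⟩ := hd
  have hpos : 0 < Fintype.card F - 1 := Nat.sub_pos_of_lt Fintype.one_lt_card
  have hζe : IsPrimitiveRoot (ζ ^ e) d := hζ.pow hpos (by rw [he, mul_comm])
  have hset : {x : F | x ^ d = 1} = ↑(Polynomial.nthRootsFinset d (1 : F)) := by
    ext x
    simp [Polynomial.mem_nthRootsFinset (Nat.pos_of_ne_zero hd0)]
  rw [hset, Set.ncard_coe_finset, hζe.card_nthRootsFinset]

lemma FiniteField.ncard_pow_eq_self {q : ℕ} (hq : 1 < q) (hdvd : q - 1 ∣ Fintype.card F - 1) :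
    {x : F | x ^ q = x}.ncard = q := by
  have hset : {x : F | x ^ q = x} = insert 0 {x | x ^ (q - 1) = 1} := by
    ext x
    simp [pow_eq_self_iff (q := q) (by omega)]
  rw [hset, Set.ncard_insert_of_notMem (by simp [zero_pow (by omega : q - 1 ≠ 0)]),
    FiniteField.ncard_pow_eq_one (by omega) hdvd]
  omega

lemma FiniteField.ncard_pow_eq_self_and_pow_eq_one {q : ℕ} (hq : 1 < q)
    (hdvd : q - 1 ∣ Fintype.card F - 1) {n : ℕ} (hn : n ≠ 0) :
    {y : F | y ^ q = y ∧ y ^ n = 1}.ncard = n.gcd (q - 1) := by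
  have hset : {y : F | y ^ q = y ∧ y ^ n = 1} = {y | y ^ n.gcd (q - 1) = 1} := by
    ext y
    simp only [Set.mem_ofPred_eq, pow_gcd_eq_one, pow_eq_self_iff (q := q) (by omega)]
    constructor
    · rintro ⟨h | h, hn1⟩
      · simp [h, zero_pow hn] at hn1
      · exact ⟨hn1, h⟩
    · rintro ⟨hn1, h⟩
      exact ⟨Or.inr h, hn1⟩
  rw [hset, FiniteField.ncard_pow_eq_one (Nat.gcd_pos_of_pos_left _ (Nat.pos_of_ne_zero hn)).ne'
    ((Nat.gcd_dvd_right n (q - 1)).trans hdvd)]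

lemma iterateFrobenius_involutive {p s : ℕ} [ExpChar F p] (hF : Fintype.card F = (p ^ s) ^ 2) :
    Involutive (iterateFrobenius F p s) := fun x => by
  rw [iterateFrobenius_def, iterateFrobenius_def, ← pow_mul, ← sq, ← hF, FiniteField.pow_card]

end FiniteField

/-- `n` even, `n ≥ 2`, `a² ≠ c²`. Then (i) the zero set of `f` is
`{X : X^q = X}` with `q` elements; (ii) exactly `(q-1)/𝔤(n)` of the nonzero `u`
with `u^q = u` have nonempty preimage; (iii) each such preimage has `𝔤(n)` elements;
(iv) any `Y` with `f(Y) ≠ 0` and `f(f(Y)) = 0` has empty preimage. -/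
theorem stmt_2 (p s q : ℕ) (hp : p.Prime) (hpodd : p ≠ 2) (hs : 0 < s) (hq : q = p ^ s)
    (F : Type*) [Field F] [Fintype F] (hF : Fintype.card F = q ^ 2)
    (a c : F) (ha : a ^ q = a) (hc : c ^ q = c)
    (n : ℕ) (hn2 : 2 ≤ n) (hneven : Even n)
    (hac : a ^ 2 ≠ c ^ 2)
    (f : F → F) (hf : ∀ X, f X = (c * X ^ q + a * X) * (X ^ q - X) ^ (n - 1)) :
    ({X : F | f X = 0} = {X : F | X ^ q = X} ∧ {X : F | f X = 0}.ncard = q) ∧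
    ({u : F | u ≠ 0 ∧ u ^ q = u ∧ (f ⁻¹' {u}).Nonempty}.ncard = (q - 1) / Nat.gcd n (q - 1)) ∧
    (∀ u : F, u ≠ 0 → u ^ q = u → (f ⁻¹' {u}).Nonempty →
      (f ⁻¹' {u}).ncard = Nat.gcd n (q - 1)) ∧
    (∀ Y : F, f Y ≠ 0 → f (f Y) = 0 → f ⁻¹' {Y} = ∅) := by
  subst hq
  have := Fact.mk hp
  have : CharP F p := charP_of_card_eq_prime_pow (f := s * 2) (by rw [hF, pow_mul])
  have h2 : (2 : F) ≠ 0 := Ring.two_ne_zero (by rwa [ringChar.eq F p])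
  set σ := iterateFrobenius F p s
  have hσ : Involutive σ := iterateFrobenius_involutive hF
  obtain rfl : f = twistedMap σ a c n := funext hf
  simp only [← iterateFrobenius_def] at ha hc ⊢
  have hq : 1 < p ^ s := Nat.one_lt_pow hs.ne' hp.one_lt
  have hdvd : p ^ s - 1 ∣ Fintype.card F - 1 := by
    simpa [hF] using Nat.sub_dvd_pow_sub_pow (p ^ s) 1 2
  have hn0 : n ≠ 0 := by omega
  have hodd : Odd (n - 1) := Nat.Even.sub_odd (by omega) hneven odd_one
  have hadd : a + c ≠ 0 := add_ne_zero_of_sq_ne_sq hac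
  have hzero : {X : F | twistedMap σ a c n X = 0} = {X | σ X = X} :=
    Set.ext fun X => twistedMap_eq_zero_iff hσ ha hc hac hodd.pos.ne'
  have hfix : {X : F | σ X = X}.ncard = p ^ s := FiniteField.ncard_pow_eq_self hq hdvd
  have hroots : {y : F | σ y = y ∧ y ^ n = 1}.ncard = n.gcd (p ^ s - 1) :=
    FiniteField.ncard_pow_eq_self_and_pow_eq_one hq hdvd hn0
  refine ⟨⟨hzero, hzero ▸ hfix⟩, ?_, fun u hu0 hu hne => ?_,
    fun Y => preimage_twistedMap_singleton_eq_empty hσ ha hc hac hodd⟩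
  · exact ncard_fixed_values_twistedMap hσ ha hc hac h2 hneven hn0 hfix
      (by rw [Nat.card_eq_fintype_card, hF]; nlinarith) hroots
  · exact (ncard_preimage_twistedMap_singleton hσ ha hc hadd hodd hu0 hu hne).trans hroots
end

section
/- Assume n is even, n ≥ 2, a + c ≠ 0, a − c ≠ 0, and a^2 − c^2 is a (nonzero) square in F_q. Then every nonzero periodic point of f in F_{q^2} has even minimal period; in particular X = 0 is the unique fixed point of f. -/
/-- `n` even, `n ≥ 2`, `a + c ≠ 0`, `a - c ≠ 0`, and `a² - c²` a (nonzero)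
square in `F_q`. Then every nonzero periodic point has even minimal period; in
particular `0` is the unique fixed point. -/
theorem stmt_6 (p s q : ℕ) (hp : p.Prime) (hpodd : p ≠ 2) (hs : 0 < s) (hq : q = p ^ s)
    (F : Type*) [Field F] [Fintype F] (hF : Fintype.card F = q ^ 2)
    (a c : F) (ha : a ^ q = a) (hc : c ^ q = c)
    (n : ℕ) (hn2 : 2 ≤ n) (hneven : Even n)
    (h1 : a + c ≠ 0) (h2 : a - c ≠ 0)
    (hsq : ∃ y : F, y ^ q = y ∧ y ^ 2 = a ^ 2 - c ^ 2)
    (f : F → F) (hf : ∀ X, f X = (c * X ^ q + a * X) * (X ^ q - X) ^ (n - 1)) :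
    (∀ X : F, X ≠ 0 → (∃ k : ℕ, 1 ≤ k ∧ f^[k] X = X) →
      Even (Function.minimalPeriod f X)) ∧
    (∀ X : F, f X = X ↔ X = 0) := by
  have hodd1 : Odd (n - 1) := Nat.Even.sub_odd (by omega) hneven odd_one
  have hn1ne : n - 1 ≠ 0 := by omega
  haveI hpF : Fact p.Prime := ⟨hp⟩
  have hcharP : CharP F p := by
    obtain ⟨ℓ, hch⟩ := CharP.exists F
    haveI := hch
    haveI hℓp : Fact ℓ.Prime := ⟨CharP.char_is_prime F ℓ⟩
    obtain ⟨m, hℓ, hcard⟩ := FiniteField.card F ℓ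
    have hpl : p = ℓ := by
      have hd : p ∣ ℓ ^ (m : ℕ) := by
        rw [← hcard, hF, hq, ← pow_mul]
        exact dvd_pow_self p (by positivity)
      exact (Nat.prime_dvd_prime_iff_eq hp hℓp.1).mp (hp.dvd_of_dvd_pow hd)
    rwa [hpl]
  haveI := hcharP
  have hq1 : 1 ≤ q := by rw [hq]; exact Nat.one_le_pow _ _ hp.pos
  have hqodd : Odd q := by rw [hq]; exact (hp.odd_of_ne_two hpodd).pow
  have hneg1 : (-1 : F) ≠ 1 := by
    intro h
    have h20 : (2 : F) = 0 := by linear_combination -h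
    have hdvd : p ∣ 2 := (CharP.cast_eq_zero_iff F p 2).mp (by exact_mod_cast h20)
    exact hpodd ((Nat.prime_dvd_prime_iff_eq hp Nat.prime_two).mp hdvd)
  -- Frobenius-type identities
  have hadd : ∀ x y : F, (x + y) ^ q = x ^ q + y ^ q := by
    intro x y; rw [hq]; exact add_pow_char_pow x y p s
  have hsub : ∀ x y : F, (x - y) ^ q = x ^ q - y ^ q := by
    intro x y; rw [hq]; exact sub_pow_char_pow x y s
  have hqq : ∀ x : F, (x ^ q) ^ q = x := by
    intro x
    rw [← pow_mul, ← sq, ← hF, FiniteField.pow_card]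
  have hus : ∀ Z : F, (Z ^ q - Z) ^ q = Z - Z ^ q := by
    intro Z
    rw [hsub, hqq]
  -- q-th power of f X
  have fq : ∀ X : F, (f X) ^ q = -((a * X ^ q + c * X) * (X ^ q - X) ^ (n - 1)) := by
    intro X
    have e1 : (f X) ^ q = (c * X + a * X ^ q) * (X - X ^ q) ^ (n - 1) := by
      rw [hf, mul_pow, hadd, mul_pow, mul_pow, hc, ha, hqq, pow_right_comm, hus]
    rw [e1, show (X : F) - X ^ q = -(X ^ q - X) by ring, hodd1.neg_pow]
    ring
  have step : ∀ Y : F, ((f Y) ^ q - f Y) * ((f Y) ^ q + f Y)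
      = ((a ^ 2 - c ^ 2) * ((Y ^ q - Y) ^ 2) ^ (n - 1)) * ((Y ^ q - Y) * (Y ^ q + Y)) := by
    intro Y
    rw [fq Y, hf Y]
    have hsq2 : ((Y ^ q - Y) ^ 2) ^ (n - 1) = ((Y ^ q - Y) ^ (n - 1)) ^ 2 := by
      rw [← pow_mul, ← pow_mul, Nat.mul_comm]
    rw [hsq2]
    generalize (Y ^ q - Y) ^ (n - 1) = t
    ring
  have f0 : f 0 = 0 := by
    rw [hf]
    rw [zero_pow (by omega : q ≠ 0)]
    simp [zero_pow hn1ne]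
  -- square facts
  obtain ⟨y, hyq, hy2⟩ := hsq
  have hac0 : a ^ 2 - c ^ 2 ≠ 0 := by rw [sq_sub_sq]; exact mul_ne_zero h1 h2
  have hy0 : y ≠ 0 := by
    intro h; apply hac0; rw [← hy2, h]; simp
  have hyq1 : y ^ (q - 1) = 1 := by
    refine mul_right_cancel₀ hy0 ?_
    rw [← pow_succ, Nat.sub_add_cancel hq1, hyq, one_mul]
  have hev : Even (q - 1) := Nat.Odd.sub_odd hqodd odd_one
  have h2m : 2 * ((q - 1) / 2) = q - 1 := Nat.two_mul_div_two_of_even hev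
  have hac : (a ^ 2 - c ^ 2) ^ ((q - 1) / 2) = 1 := by
    rw [← hy2, ← pow_mul, h2m, hyq1]
  -- main lemma: every (positive) period of a nonzero point is even
  have key : ∀ K : ℕ, 1 ≤ K → ∀ X : F, X ≠ 0 → f^[K] X = X → Even K := by
    intro K hK1 X hX0 hXK
    have horb0 : ∀ j, f^[j] X ≠ 0 := by
      intro j hj
      apply hX0
      have hmul : f^[K * j] X = X := Function.IsPeriodicPt.mul_const hXK j
      have hjle : j ≤ K * j := Nat.le_mul_of_pos_left j (by omega)
      have hsplit : f^[K * j] X = f^[K * j - j] (f^[j] X) := by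
        rw [← Function.iterate_add_apply]
        congr 1
        omega
      calc X = f^[K * j] X := hmul.symm
        _ = f^[K * j - j] (f^[j] X) := hsplit
        _ = 0 := by rw [hj]; exact Function.iterate_fixed f0 _
    have hper : ∀ j, f^[K] (f^[j] X) = f^[j] X := by
      intro j
      rw [← Function.iterate_add_apply, Nat.add_comm, Function.iterate_add_apply, hXK]
    have hnotfix : ∀ Y : F, Y ≠ 0 → f^[K] Y = Y → Y ^ q ≠ Y := by
      intro Y hY0 hYK hYq
      have hfY : f Y = 0 := by
        rw [hf, hYq, sub_self, zero_pow hn1ne, mul_zero]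
      apply hY0
      calc Y = f^[K] Y := hYK.symm
        _ = f^[(K - 1) + 1] Y := by rw [Nat.sub_add_cancel hK1]
        _ = f^[K - 1] (f Y) := Function.iterate_succ_apply f (K - 1) Y
        _ = 0 := by rw [hfY]; exact Function.iterate_fixed f0 _
    have hnotneg : ∀ Y : F, Y ≠ 0 → f^[K] Y = Y → Y ^ q ≠ -Y := by
      intro Y hY0 hYK hYq
      have hfix : (f Y) ^ q = f Y := by
        rw [fq, hf, hYq]; ring
      have hffY : f (f Y) = 0 := by
        rw [hf (f Y), hfix, sub_self, zero_pow hn1ne, mul_zero]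
      rcases Nat.lt_or_ge K 2 with hK2 | hK2
      · -- K = 1
        have hK : K = 1 := by omega
        rw [hK] at hYK
        simp only [Function.iterate_one] at hYK
        have hYfix : Y ^ q = Y := by
          calc Y ^ q = (f Y) ^ q := by rw [hYK]
            _ = f Y := hfix
            _ = Y := hYK
        have hcan : (-1 : F) * Y = 1 * Y := by
          rw [neg_one_mul, one_mul, ← hYq, hYfix]
        exact hneg1 (mul_right_cancel₀ hY0 hcan)
      · apply hY0
        calc Y = f^[K] Y := hYK.symm
          _ = f^[(K - 2) + 2] Y := by rw [Nat.sub_add_cancel hK2]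
          _ = f^[K - 2] (f^[2] Y) := Function.iterate_add_apply f (K - 2) 2 Y
          _ = f^[K - 2] (f (f Y)) := rfl
          _ = 0 := by rw [hffY]; exact Function.iterate_fixed f0 _
    have main : ∀ k : ℕ, ∃ R : F, R ^ ((q - 1) / 2) = (-1) ^ k ∧
        ((f^[k] X) ^ q - f^[k] X) * ((f^[k] X) ^ q + f^[k] X)
          = R * ((X ^ q - X) * (X ^ q + X)) := by
      intro k
      induction k with
      | zero => exact ⟨1, by simp, by simp⟩
      | succ k ih =>
        obtain ⟨R, hRm, hR⟩ := ih
        set Y := f^[k] X with hY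
        have hY0 : Y ≠ 0 := horb0 k
        have hYK : f^[K] Y = Y := hper k
        have hu0 : Y ^ q - Y ≠ 0 := sub_ne_zero.mpr (hnotfix Y hY0 hYK)
        have h3 : (Y ^ q - Y) ^ (q - 1) * (Y ^ q - Y) = -(Y ^ q - Y) := by
          rw [← pow_succ, Nat.sub_add_cancel hq1, hus]; ring
        have hu1 : (Y ^ q - Y) ^ (q - 1) = -1 :=
          mul_right_cancel₀ hu0 (by rw [h3]; ring)
        have husqm : ((Y ^ q - Y) ^ 2) ^ ((q - 1) / 2) = -1 := by
          rw [← pow_mul, h2m, hu1]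
        refine ⟨(a ^ 2 - c ^ 2) * ((Y ^ q - Y) ^ 2) ^ (n - 1) * R, ?_, ?_⟩
        · rw [mul_pow, mul_pow, hac, hRm, pow_right_comm, husqm, hodd1.neg_one_pow,
            pow_succ]
          ring
        · rw [Function.iterate_succ_apply' f k X]
          rw [step Y, hR]
          ring
    obtain ⟨R, hRm, hR⟩ := main K
    rw [hXK] at hR
    have hH0 : (X ^ q - X) * (X ^ q + X) ≠ 0 := by
      refine mul_ne_zero (sub_ne_zero.mpr (hnotfix X hX0 hXK)) ?_
      intro h
      exact hnotneg X hX0 hXK (by linear_combination h)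
    have hR1 : R = 1 := mul_right_cancel₀ hH0 (by rw [one_mul]; exact hR.symm)
    rw [hR1, one_pow] at hRm
    rcases Nat.even_or_odd K with hKe | hKo
    · exact hKe
    · exfalso
      rw [hKo.neg_one_pow] at hRm
      exact hneg1 hRm.symm
  constructor
  · rintro X hX0 ⟨k, hk1, hk⟩
    have hmem : X ∈ Function.periodicPts f := ⟨k, by omega, hk⟩
    have hpos := Function.minimalPeriod_pos_of_mem_periodicPts hmem
    exact key _ hpos X hX0 (Function.iterate_minimalPeriod)
  · intro X
    constructor
    · intro hfx
      by_contra hX0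
      have := key 1 le_rfl X hX0 (by simpa using hfx)
      simp at this
    · rintro rfl; exact f0
end

section
/- Assume n is odd, n ≥ 3, and a = c ≠ 0. Then: (i) f(f(X)) = 0 for every X ∈ F_{q^2}; (ii) {X ∈ F_{q^2} : f(X) = 0} = {X : X^q = X} ∪ {X : X^q = −X}, with exactly 2q − 1 elements; (iii) the nonzero elements α ∈ F_{q^2} with f^{-1}(α) nonempty are exactly the q − 1 elements α ≠ 0 with α^q = α, and each of these satisfies #f^{-1}(α) = q − 1. -/
/-!
Let `σ X = X ^ q`, an involutive ring automorphism of `F` since `#F = q ^ 2`. As `2` is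
invertible, every `X` splits uniquely as `u + t` with `σ u = u` and `σ t = -t`, and then
`f (u + t) = c * 2 ^ n * t ^ (n - 1) * u`. So `f` takes values in the fixed field, on which it
vanishes; its zeros are the `X` with `u = 0` or `t = 0`; and for a fixed `α ≠ 0` the fibre over
`α` is parametrized by `t ≠ 0` through `u = α / (c * 2 ^ n * t ^ (n - 1))`. Both eigenspaces of
`σ` consist of roots of `X ^ q ∓ X`, so have at most `q` elements, while the product of their
sizes is `q ^ 2`; hence each has exactly `q` elements.
-/

open Polynomial in
lemma ncard_setOf_pow_eq_mul_le_s12 {F : Type*} [Field F] {q : ℕ} (hq : 2 ≤ q) (b : F) :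
    {x : F | x ^ q = b * x}.ncard ≤ q := by
  have hdeg : (X ^ q - C b * X : F[X]).natDegree = q := by
    rw [natDegree_sub_eq_left_of_natDegree_lt] <;> simp only [natDegree_X_pow]
    exact (natDegree_C_mul_le b X).trans_lt (by simp; omega)
  have hne : (X ^ q - C b * X : F[X]) ≠ 0 := ne_zero_of_natDegree_gt (hdeg ▸ hq)
  calc {x : F | x ^ q = b * x}.ncard = ((X ^ q - C b * X : F[X]).rootSet F).ncard := by
        congr 1
        ext x
        simp [mem_rootSet, hne, sub_eq_zero]
    _ ≤ q := (ncard_rootSet_le _ _).trans hdeg.le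

section Involution

variable {F : Type*} [Field F] (σ : F →+* F)

def traceDiffMap (c : F) (m : ℕ) (X : F) : F := c * (σ X + X) * (σ X - X) ^ m

variable {σ} {c : F} {m : ℕ}

lemma map_traceDiffMap (hσ : ∀ x, σ (σ x) = x) (hc : σ c = c) (hm : Even m) (X : F) :
    σ (traceDiffMap σ c m X) = traceDiffMap σ c m X := by
  have hswap : X - σ X = -(σ X - X) := (neg_sub _ _).symm
  simp only [traceDiffMap, map_mul, map_add, map_sub, map_pow, hσ, hc, hswap, hm.neg_pow]
  ring

lemma traceDiffMap_of_map_eq (hm : m ≠ 0) {X : F} (hX : σ X = X) : traceDiffMap σ c m X = 0 := by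
  simp [traceDiffMap, hX, hm]

lemma traceDiffMap_traceDiffMap (hσ : ∀ x, σ (σ x) = x) (hc : σ c = c) (hm : Even m)
    (hm0 : m ≠ 0) (X : F) : traceDiffMap σ c m (traceDiffMap σ c m X) = 0 :=
  traceDiffMap_of_map_eq hm0 (map_traceDiffMap hσ hc hm X)

lemma setOf_traceDiffMap_eq_zero (hc0 : c ≠ 0) (hm0 : m ≠ 0) :
    {X | traceDiffMap σ c m X = 0} = {X | σ X = X} ∪ {X | σ X = -X} := by
  ext X
  simp [traceDiffMap, hc0, hm0, sub_eq_zero, add_eq_zero_iff_eq_neg, or_comm]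

lemma traceDiffMap_add (hm : Even m) {u t : F} (hu : σ u = u) (ht : σ t = -t) :
    traceDiffMap σ c m (u + t) = c * 2 ^ (m + 1) * t ^ m * u := by
  have hdiff : u + -t - (u + t) = -(2 * t) := by ring
  simp only [traceDiffMap, map_add, hu, ht, hdiff, hm.neg_pow]
  ring

lemma sub_map_div_two_of_add (h2 : (2 : F) ≠ 0) {u t : F} (hu : σ u = u) (ht : σ t = -t) :
    (u + t - σ (u + t)) / 2 = t := by
  rw [map_add, hu, ht]
  field_simp
  ring

def fixedAntiFixedEquiv (hσ : ∀ x, σ (σ x) = x) (h2 : (2 : F) ≠ 0) :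
    F ≃ {x | σ x = x} × {x | σ x = -x} where
  toFun X := (⟨(X + σ X) / 2, by simp [map_ofNat, hσ, add_comm]⟩,
    ⟨(X - σ X) / 2, by simp [map_ofNat, hσ]; ring⟩)
  invFun v := v.1 + v.2
  left_inv X := by field_simp; ring
  right_inv := by
    rintro ⟨⟨u, hu⟩, ⟨t, ht⟩⟩
    ext
    · change (u + t + σ (u + t)) / 2 = u
      rw [map_add, hu, ht]
      field_simp
      ring
    · exact sub_map_div_two_of_add h2 hu ht

lemma ncard_fixed_union_antiFixed_add_one [Finite F] (h2 : (2 : F) ≠ 0) :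
    ({X | σ X = X} ∪ {X | σ X = -X}).ncard + 1 = {X | σ X = X}.ncard + {X | σ X = -X}.ncard := by
  have hinter : {X | σ X = X} ∩ {X | σ X = -X} = {0} := by
    ext X
    simp only [Set.mem_inter_iff, Set.mem_ofPred_eq, Set.mem_singleton_iff]
    constructor
    · rintro ⟨hfix, hanti⟩
      have h2X : 2 * X = 0 := by linear_combination hanti - hfix
      exact (mul_eq_zero.mp h2X).resolve_left h2
    · rintro rfl
      simp
  rw [← Set.ncard_union_add_ncard_inter, hinter, Set.ncard_singleton]

lemma map_div_antiFixed_pow (hc : σ c = c) (hm : Even m) {α t : F} (hα : σ α = α)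
    (ht : σ t = -t) : σ (α / (c * 2 ^ (m + 1) * t ^ m)) = α / (c * 2 ^ (m + 1) * t ^ m) := by
  simp only [map_div₀, map_mul, map_pow, map_ofNat, hα, hc, ht, hm.neg_pow]

lemma injOn_add_antiFixed (h2 : (2 : F) ≠ 0) {g : F → F}
    (hg : ∀ t, σ t = -t → σ (g t) = g t) : Set.InjOn (fun t => g t + t) {t | σ t = -t} := by
  intro t₁ ht₁ t₂ ht₂ h
  rw [← sub_map_div_two_of_add h2 (hg t₁ ht₁) ht₁, ← sub_map_div_two_of_add h2 (hg t₂ ht₂) ht₂]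
  exact congrArg (fun X => (X - σ X) / 2) h

lemma preimage_traceDiffMap_singleton (hσ : ∀ x, σ (σ x) = x) (h2 : (2 : F) ≠ 0)
    (hc : σ c = c) (hc0 : c ≠ 0) (hm : Even m) (hm0 : m ≠ 0) {α : F} (hα : σ α = α)
    (hα0 : α ≠ 0) : traceDiffMap σ c m ⁻¹' {α} =
      (fun t => α / (c * 2 ^ (m + 1) * t ^ m) + t) '' ({t | σ t = -t} \ {0}) := by
  ext X
  constructor
  · intro hX
    have hXsplit := (fixedAntiFixedEquiv hσ h2).symm_apply_apply X
    generalize fixedAntiFixedEquiv hσ h2 X = v at hXsplit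
    obtain ⟨⟨u, hu⟩, ⟨t, ht⟩⟩ := v
    subst hXsplit
    have hfX : c * 2 ^ (m + 1) * t ^ m * u = α := by
      rwa [← traceDiffMap_add hm hu ht]
    have ht0 : t ≠ 0 := by
      rintro rfl
      simp [hm0] at hfX
      exact hα0 hfX.symm
    refine ⟨t, ⟨ht, ht0⟩, ?_⟩
    change α / (c * 2 ^ (m + 1) * t ^ m) + t = u + t
    rw [← hfX]
    field_simp
  · rintro ⟨t, ⟨ht, ht0 : t ≠ 0⟩, rfl⟩
    rw [Set.mem_preimage, Set.mem_singleton_iff,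
      traceDiffMap_add hm (map_div_antiFixed_pow hc hm hα ht) ht]
    field_simp

lemma ncard_preimage_traceDiffMap_singleton (hσ : ∀ x, σ (σ x) = x) (h2 : (2 : F) ≠ 0)
    (hc : σ c = c) (hc0 : c ≠ 0) (hm : Even m) (hm0 : m ≠ 0) {α : F} (hα : σ α = α)
    (hα0 : α ≠ 0) : (traceDiffMap σ c m ⁻¹' {α}).ncard = {t | σ t = -t}.ncard - 1 := by
  have hinj := injOn_add_antiFixed h2 (fun t ht => map_div_antiFixed_pow hc hm hα ht)
  rw [preimage_traceDiffMap_singleton hσ h2 hc hc0 hm hm0 hα hα0,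
    (hinj.mono Set.sdiff_subset).ncard_image,
    Set.ncard_sdiff_singleton_of_mem (by simp)]

lemma setOf_ne_zero_and_preimage_nonempty (hσ : ∀ x, σ (σ x) = x) (h2 : (2 : F) ≠ 0)
    (hc : σ c = c) (hc0 : c ≠ 0) (hm : Even m) (hm0 : m ≠ 0) {t₀ : F} (ht₀ : σ t₀ = -t₀)
    (ht₀0 : t₀ ≠ 0) :
    {α | α ≠ 0 ∧ (traceDiffMap σ c m ⁻¹' {α}).Nonempty} = {α | α ≠ 0 ∧ σ α = α} := by
  ext α
  refine and_congr_right fun hα0 => ⟨?_, fun hα => ?_⟩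
  · rintro ⟨X, rfl⟩
    exact map_traceDiffMap hσ hc hm X
  · rw [preimage_traceDiffMap_singleton hσ h2 hc hc0 hm hm0 hα hα0]
    exact ⟨_, t₀, ⟨ht₀, ht₀0⟩, rfl⟩

lemma ncard_fixed_eq_and_ncard_antiFixed_eq [Fintype F] {q : ℕ} (hq : 2 ≤ q)
    (hF : Fintype.card F = q ^ 2) (hσq : ∀ x, σ x = x ^ q) (h2 : (2 : F) ≠ 0) :
    {x | σ x = x}.ncard = q ∧ {x | σ x = -x}.ncard = q := by
  have hσ x : σ (σ x) = x := by
    rw [hσq, hσq, ← pow_mul, ← sq, ← hF, FiniteField.pow_card]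
  have hprod : {x | σ x = x}.ncard * {x | σ x = -x}.ncard = q ^ 2 := by
    rw [← hF, ← Nat.card_eq_fintype_card, Nat.card_congr (fixedAntiFixedEquiv hσ h2),
      Nat.card_prod, Nat.card_coe_set_eq, Nat.card_coe_set_eq]
  have hS := ncard_setOf_pow_eq_mul_le_s12 (F := F) hq 1
  have hK := ncard_setOf_pow_eq_mul_le_s12 (F := F) hq (-1)
  simp only [one_mul, neg_one_mul, ← hσq] at hS hK
  constructor <;> nlinarith

end Involution

theorem stmt_12_general (p s q : ℕ) (hp : p.Prime) (hpodd : p ≠ 2) (hs : 0 < s) (hq : q = p ^ s)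
    (F : Type*) [Field F] [Fintype F] (hF : Fintype.card F = q ^ 2)
    (a c : F) (hc : c ^ q = c)
    (n : ℕ) (hn3 : 3 ≤ n) (hnodd : Odd n)
    (hac : a = c) (hc0 : c ≠ 0)
    (f : F → F) (hf : ∀ X, f X = (c * X ^ q + a * X) * (X ^ q - X) ^ (n - 1)) :
    (∀ X : F, f (f X) = 0) ∧
    ({X : F | f X = 0} = {X : F | X ^ q = X} ∪ {X : F | X ^ q = -X} ∧
      {X : F | f X = 0}.ncard = 2 * q - 1) ∧
    ({α : F | α ≠ 0 ∧ (f ⁻¹' {α}).Nonempty} = {α : F | α ≠ 0 ∧ α ^ q = α} ∧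
      {α : F | α ≠ 0 ∧ α ^ q = α}.ncard = q - 1 ∧
      ∀ α : F, α ≠ 0 → α ^ q = α → (f ⁻¹' {α}).ncard = q - 1) := by
  have : Fact p.Prime := ⟨hp⟩
  have : CharP F p := charP_of_card_eq_prime_pow (f := s * 2) (by rw [hF, hq, pow_mul])
  obtain ⟨σ, hσq⟩ : ∃ σ : F →+* F, ∀ x, σ x = x ^ q :=
    ⟨iterateFrobenius F p s, fun x => by rw [iterateFrobenius_def, hq]⟩
  have hσ x : σ (σ x) = x := by rw [hσq, hσq, ← pow_mul, ← sq, ← hF, FiniteField.pow_card]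
  have h2 : (2 : F) ≠ 0 := Ring.two_ne_zero (by rwa [ringChar.eq F p])
  have hq2 : 2 ≤ q := hq ▸ Nat.one_lt_pow hs.ne' hp.one_lt
  have hm : Even (n - 1) := Nat.Odd.sub_odd hnodd odd_one
  have hm0 : n - 1 ≠ 0 := by omega
  have hcσ : σ c = c := (hσq c).trans hc
  obtain rfl : f = traceDiffMap σ c (n - 1) :=
    funext fun X => by rw [hf, hac, traceDiffMap, hσq]; ring
  simp only [← hσq]
  obtain ⟨hS, hK⟩ := ncard_fixed_eq_and_ncard_antiFixed_eq hq2 hF hσq h2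
  obtain ⟨t₀, ht₀, ht₀0⟩ := Set.exists_ne_of_one_lt_ncard (hK ▸ hq2) 0
  have hunion := ncard_fixed_union_antiFixed_add_one (σ := σ) h2
  have hfixed0 : {α | α ≠ 0 ∧ σ α = α} = {α | σ α = α} \ {0} := by
    ext α
    exact and_comm
  refine ⟨traceDiffMap_traceDiffMap hσ hcσ hm hm0, ⟨setOf_traceDiffMap_eq_zero hc0 hm0, ?_⟩,
    setOf_ne_zero_and_preimage_nonempty hσ h2 hcσ hc0 hm hm0 ht₀ ht₀0, ?_,
    fun α hα0 hα => ?_⟩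
  · rw [setOf_traceDiffMap_eq_zero hc0 hm0]
    omega
  · rw [hfixed0, Set.ncard_sdiff_singleton_of_mem (by simp), hS]
  · rw [ncard_preimage_traceDiffMap_singleton hσ h2 hcσ hc0 hm hm0 hα hα0, hK]

/-- `n` odd, `n ≥ 3`, `a = c ≠ 0`. Then (i) `f ∘ f ≡ 0`;
(ii) the zero set of `f` is `{X : X^q = X} ∪ {X : X^q = -X}` with `2q - 1` elements;
(iii) the nonzero `α` with nonempty preimage are exactly the `q - 1` nonzero elements of
`F_q`, each with preimage of size `q - 1`. -/
theorem stmt_12 (p s q : ℕ) (hp : p.Prime) (hpodd : p ≠ 2) (hs : 0 < s) (hq : q = p ^ s)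
    (F : Type*) [Field F] [Fintype F] (hF : Fintype.card F = q ^ 2)
    (a c : F) (ha : a ^ q = a) (hc : c ^ q = c)
    (n : ℕ) (hn3 : 3 ≤ n) (hnodd : Odd n)
    (hac : a = c) (hc0 : c ≠ 0)
    (f : F → F) (hf : ∀ X, f X = (c * X ^ q + a * X) * (X ^ q - X) ^ (n - 1)) :
    (∀ X : F, f (f X) = 0) ∧
    ({X : F | f X = 0} = {X : F | X ^ q = X} ∪ {X : F | X ^ q = -X} ∧
      {X : F | f X = 0}.ncard = 2 * q - 1) ∧
    ({α : F | α ≠ 0 ∧ (f ⁻¹' {α}).Nonempty} = {α : F | α ≠ 0 ∧ α ^ q = α} ∧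
      {α : F | α ≠ 0 ∧ α ^ q = α}.ncard = q - 1 ∧
      ∀ α : F, α ≠ 0 → α ^ q = α → (f ⁻¹' {α}).ncard = q - 1) :=
  stmt_12_general p s q hp hpodd hs hq F hF a c hc n hn3 hnodd hac hc0 f hf
end
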